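/- Kruskal's theorem for labelled trees of bounded branching degree (∀n KT_ℓ(n)): for every natural number n and every well quasi-order (Q, ≤_Q), the set T_n(Q) of finite rooted ordered trees with labels in Q and branching degree at most n, quasi-ordered by the embeddability relation ⪯, is a well quasi-order. -/

import Mathlib

/-- Finite rooted ordered trees (rose trees) with labels in `Q`. -/
inductive RoseTree (Q : Type) : Type
  | node : Q → List (RoseTree Q) → RoseTree Q

/-- The embeddability relation `⪯` on labelled trees. -/
inductive TreeEmb {Q : Type} (le : Q → Q → Prop) : RoseTree Q → RoseTree Q → Prop
  | subtree {t : RoseTree Q} {q : Q} {ss : List (RoseTree Q)} {s : RoseTree Q} :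
      s ∈ ss → TreeEmb le t s → TreeEmb le t (RoseTree.node q ss)
  | node {p q : Q} {ts ss : List (RoseTree Q)} :
      le p q → List.SublistForall₂ (TreeEmb le) ts ss →
      TreeEmb le (RoseTree.node p ts) (RoseTree.node q ss)

/-- `DegLe n t` says the tree `t` has branching degree at most `n`:
every node has at most `n` children. -/
inductive DegLe {Q : Type} (n : ℕ) : RoseTree Q → Prop
  | node (q : Q) (ts : List (RoseTree Q)) :
      ts.length ≤ n → (∀ t ∈ ts, DegLe n t) → DegLe n (RoseTree.node q ts)

/-! Nash-Williams' minimal bad sequence argument. If some sequence of trees is bad, there is one,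
`f`, that is bad and, at every position, of minimal size among the bad sequences with the same
prefix. The immediate subtrees of its members are then well quasi-ordered: let `g` be a bad
sequence of them and `f d` the parent of least index of a term `g k`. Then
`f 0, …, f (d - 1), g k, g (k + 1), …` is still bad, since `f a ⪯ g l` would give
`f a ⪯ f d'` for the parent `f d'` of `g l`, where `a < d ≤ d'`; but it is smaller than `f` at
position `d`. By Higman's lemma the lists of children contain a subsequence increasing under
`SublistForall₂`, and a good pair among its root labels gives a good pair of trees. -/

namespace List.SublistForall₂

variable {α : Type*} {r s t : α → α → Prop}

theorem exists_mem_rel {l₁ l₂ : List α} (h : SublistForall₂ r l₁ l₂) {a : α} (ha : a ∈ l₁) :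
    ∃ b ∈ l₂, r a b := by
  induction h with
  | nil => cases ha
  | cons hr _ ih =>
    rcases mem_cons.1 ha with rfl | ha
    · exact ⟨_, mem_cons_self, hr⟩
    · obtain ⟨b, hb, hab⟩ := ih ha
      exact ⟨b, mem_cons_of_mem _ hb, hab⟩
  | cons_right _ ih =>
    obtain ⟨b, hb, hab⟩ := ih ha
    exact ⟨b, mem_cons_of_mem _ hb, hab⟩

theorem trans_of_mem {l₁ l₂ l₃ : List α} (hcomp : ∀ a b c, c ∈ l₃ → r a b → s b c → t a c)
    (h₁₂ : SublistForall₂ r l₁ l₂) (h₂₃ : SublistForall₂ s l₂ l₃) : SublistForall₂ t l₁ l₃ := by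
  induction h₂₃ generalizing l₁ with
  | nil =>
    cases h₁₂
    exact nil
  | cons hbc _ ih =>
    cases h₁₂ with
    | nil => exact nil
    | cons hab h₁₂ =>
      exact cons (hcomp _ _ _ mem_cons_self hab hbc)
        (ih (fun a b c hc => hcomp a b c (mem_cons_of_mem _ hc)) h₁₂)
    | cons_right h₁₂ =>
      exact cons_right (ih (fun a b c hc => hcomp a b c (mem_cons_of_mem _ hc)) h₁₂)
  | cons_right _ ih =>
    exact cons_right (ih (fun a b c hc => hcomp a b c (mem_cons_of_mem _ hc)) h₁₂)

instance [IsPreorder α r] : IsPreorder (List α) (SublistForall₂ r) where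

end List.SublistForall₂

namespace RoseTree

variable {Q : Type}

def label : RoseTree Q → Q
  | node q _ => q

def children : RoseTree Q → List (RoseTree Q)
  | node _ ts => ts

@[simp]
theorem node_label_children (t : RoseTree Q) : node t.label t.children = t := by
  cases t; rfl

theorem sizeOf_lt_of_mem_children {t s : RoseTree Q} (h : t ∈ s.children) :
    sizeOf t < sizeOf s := by
  cases s with
  | node q ts =>
    have := List.sizeOf_lt_of_mem (show t ∈ ts from h)
    simp only [node.sizeOf_spec]
    omega

end RoseTree

namespace TreeEmb

open RoseTree

variable {Q : Type} {le : Q → Q → Prop}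

theorem of_mem_children {s t u : RoseTree Q} (hs : s ∈ t.children) (h : TreeEmb le u s) :
    TreeEmb le u t := by
  rw [← node_label_children t]
  exact subtree hs h

theorem refl [Std.Refl le] (t : RoseTree Q) : TreeEmb le t t := by
  rw [← node_label_children t]
  refine node (_root_.refl _) <|
    List.sublistForall₂_iff.2 ⟨_, List.forall₂_same.2 fun s hs => ?_, .refl _⟩
  have := sizeOf_lt_of_mem_children hs
  exact refl s
termination_by sizeOf t

theorem trans [IsTrans Q le] :
    ∀ {t u v : RoseTree Q}, TreeEmb le t u → TreeEmb le u v → TreeEmb le t v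
  | _, _, .node _ _, htu, .subtree hs huv => .subtree hs (trans htu huv)
  | _, _, .node _ _, .subtree hs htu, .node _ hus =>
    have ⟨w, hw, huw⟩ := hus.exists_mem_rel hs
    .subtree hw (trans htu huw)
  | _, _, .node _ _, .node hpq hts, .node hqr hus =>
    .node (_root_.trans hpq hqr) <| List.SublistForall₂.trans_of_mem (r := TreeEmb le)
      (s := TreeEmb le) (fun _ _ _ _ hab hbc => trans hab hbc) hts hus
termination_by _ _ v => sizeOf v

instance [IsPreorder Q le] : IsPreorder (RoseTree Q) (TreeEmb le) where
  refl := refl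
  trans _ _ _ := trans

open Set PartiallyWellOrderedOn

theorem partiallyWellOrderedOn_children_of_isMinBadSeq {f : ℕ → RoseTree Q}
    (hbad : IsBadSeq (TreeEmb le) univ f) (hmin : ∀ n, IsMinBadSeq (TreeEmb le) sizeOf univ n f) :
    {t | ∃ i, t ∈ (f i).children}.PartiallyWellOrderedOn (TreeEmb le) := by
  rw [iff_forall_not_isBadSeq]
  rintro g ⟨hg, hgbad⟩
  choose parent hparent using hg
  set k₀ := Function.argmin parent
  set d := parent k₀
  have hd (k : ℕ) : d ≤ parent k := Function.argmin_le parent k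
  refine hmin d (fun j => if j < d then f j else g (k₀ + (j - d))) (fun m hm => (if_pos hm).symm)
    (by simpa using sizeOf_lt_of_mem_children (hparent k₀)) ⟨fun _ => mem_univ _, ?_⟩
  intro a b hab
  by_cases hb : b < d
  · simpa [hb, hab.trans hb] using hbad.2 a b hab
  by_cases ha : a < d
  · simp only [ha, hb, if_true, if_false]
    exact fun h => hbad.2 a _ (ha.trans_le (hd _)) (of_mem_children (hparent _) h)
  · simp only [ha, hb, if_false]
    exact hgbad _ _ (by omega)

theorem wellQuasiOrdered [IsPreorder Q le] (h : WellQuasiOrdered le) :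
    WellQuasiOrdered (TreeEmb le) := by
  rw [← partiallyWellOrderedOn_univ_iff, iff_not_exists_isMinBadSeq sizeOf]
  rintro ⟨f, hbad, hmin⟩
  have hchildren := partiallyWellOrderedOn_sublistForall₂ (TreeEmb le)
    (partiallyWellOrderedOn_children_of_isMinBadSeq hbad hmin)
  obtain ⟨g, hg⟩ := hchildren.exists_monotone_subseq (f := fun i => (f i).children)
    fun i _ hs => ⟨i, hs⟩
  obtain ⟨i, j, hij, hlabel⟩ := h fun k => (f (g k)).label
  refine hbad.2 (g i) (g j) (g.strictMono hij) ?_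
  rw [← node_label_children (f (g i)), ← node_label_children (f (g j))]
  exact node hlabel (hg i j hij.le)

end TreeEmb

/-- Kruskal's theorem for labelled trees of bounded branching degree,
∀n KT_ℓ(n): for every `n` and every well quasi-order `(Q, le)`, the trees
with labels in `Q` and branching degree at most `n`, under embeddability,
form a well quasi-order. -/
theorem kruskal_labelled_bounded (n : ℕ) {Q : Type} (le : Q → Q → Prop)
    (hrefl : Reflexive le) (htrans : Transitive le)
    (hwqo : ∀ q : ℕ → Q, ∃ i j : ℕ, i < j ∧ le (q i) (q j)) :
    ∀ f : ℕ → RoseTree Q, (∀ i, DegLe n (f i)) →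
      ∃ i j : ℕ, i < j ∧ TreeEmb le (f i) (f j) := by
  have : IsPreorder Q le := { refl := hrefl, trans := fun _ _ _ h₁ h₂ => htrans h₁ h₂ }
  exact fun f _ => TreeEmb.wellQuasiOrdered hwqo f
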